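/- Let Γ1 and Γ2 be signed graphs of the same order m with adjacency matrices A1, A2 and markings μ1, μ2 satisfying A1·μ1 = r·μ1 and A2·μ2 = r·μ2 for a common real r (as holds for r-regular signed graphs), such that A1 and A2 do not have the same characteristic polynomial and E(Γ1) = E(Γ2). Then for every signed graph Γ of order n ≥ 1 (with marking), the signed graphs Γ⊛Γ1 and Γ⊛Γ2 are non-cospectral and equienergetic: E(Γ⊛Γ1) = E(Γ⊛Γ2) and A(Γ⊛Γ1), A(Γ⊛Γ2) have different characteristic polynomials. -/

import Mathlib

open Matrix Kronecker BigOperators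

/-- The block `μ₂ᵀ ⊗ Φ₁`, where `Φ₁ = diag μ₁` and `μ₂` is regarded as an `n₂×1`
column vector: an `n₁ × (n₂·n₁)` matrix. -/
noncomputable def muBlock {n1 n2 : ℕ} (μ1 : Fin n1 → ℝ) (μ2 : Fin n2 → ℝ) :
    Matrix (Fin n1) (Fin n2 × Fin n1) ℝ :=
  Matrix.of fun i jk => μ2 jk.1 * Matrix.diagonal μ1 i jk.2

/-- Adjacency matrix of the duplication add vertex corona `Γ₁ ⊛ Γ₂`, in `3×3` block form
`[[0, A₁μ, 0], [A₁μ, 0, μ₂ᵀ⊗Φ₁], [0, μ₂⊗Φ₁, A₂⊗I]]` (blocks of sizes `n₁, n₁, n₁·n₂`),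
where `A₁μ = Φ₁·|A₁|·Φ₁` is supplied as a parameter. -/
noncomputable def coronaStar {n1 n2 : ℕ} (A1μ : Matrix (Fin n1) (Fin n1) ℝ)
    (A2 : Matrix (Fin n2) (Fin n2) ℝ) (μ1 : Fin n1 → ℝ) (μ2 : Fin n2 → ℝ) :
    Matrix ((Fin n1 ⊕ Fin n1) ⊕ Fin n2 × Fin n1)
      ((Fin n1 ⊕ Fin n1) ⊕ Fin n2 × Fin n1) ℝ :=
  Matrix.fromBlocks
    (Matrix.fromBlocks 0 A1μ A1μ 0)
    (Matrix.fromRows (0 : Matrix (Fin n1) (Fin n2 × Fin n1) ℝ) (muBlock μ1 μ2))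
    (Matrix.fromCols (0 : Matrix (Fin n2 × Fin n1) (Fin n1) ℝ) (muBlock μ1 μ2)ᵀ)
    (A2 ⊗ₖ (1 : Matrix (Fin n1) (Fin n1) ℝ))

/-- The signed `M`-coronal `χ_M(x) = μᵀ·(x·I − M)⁻¹·μ`. -/
noncomputable def coronal {V : Type} [Fintype V] [DecidableEq V]
    (M : Matrix V V ℝ) (μ : V → ℝ) (x : ℝ) : ℝ :=
  μ ⬝ᵥ ((x • (1 : Matrix V V ℝ) - M)⁻¹ *ᵥ μ)

/-- The energy of a signed graph: the sum of the absolute values of the eigenvalues (with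
multiplicity) of its symmetric adjacency matrix, i.e. of the roots of its characteristic
polynomial. -/
noncomputable def energy {V : Type} [Fintype V] [DecidableEq V] (M : Matrix V V ℝ) : ℝ :=
  (M.charpoly.roots.map abs).sum

/-!
Taking the Schur complement of the block `(x•1 - A) ⊗ I` in `x•1 - A(Γ ⊛ Γ')` gives
`det (x•1 - A(Γ ⊛ Γ')) = det (x•1 - A)^n · det (x (x - χ_A(x))•1 - A_μ²)`, where `A_μ` is the
adjacency matrix of `Γ` re-signed by its marking and `χ_A` is the coronal of `Γ'`. When
`A μ = r μ` the coronal is `m / (x - r)`, so after clearing denominators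
`(X - r)^n · charpoly A(Γ ⊛ Γ') = (charpoly A)^n · g`, where `g` depends only on `Γ`, `m` and `r`.
Comparing roots, the energy of `Γ ⊛ Γ'` is `n E(Γ') - n |r|` plus a term depending only on `g`;
cancelling `g`, equal characteristic polynomials of the coronas force
`(charpoly A₁)^n = (charpoly A₂)^n`, hence `charpoly A₁ = charpoly A₂` as both are monic.
-/

open Polynomial

theorem Polynomial.Monic.eq_of_pow_eq {K : Type*} [Field K] {p q : K[X]} (hp : p.Monic)
    (hq : q.Monic) {n : ℕ} (hn : n ≠ 0) (h : p ^ n = q ^ n) : p = q :=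
  eq_of_monic_of_associated hp hq <| associated_of_dvd_dvd
    ((UniqueFactorizationMonoid.pow_dvd_pow_iff_dvd hn).1 h.dvd)
    ((UniqueFactorizationMonoid.pow_dvd_pow_iff_dvd hn).1 h.symm.dvd)

theorem Polynomial.sum_map_roots_mul {R M : Type*} [CommRing R] [IsDomain R] [AddCommMonoid M]
    (f : R → M) {p q : R[X]} (hpq : p * q ≠ 0) :
    ((p * q).roots.map f).sum = (p.roots.map f).sum + (q.roots.map f).sum := by
  rw [roots_mul hpq, Multiset.map_add, Multiset.sum_add]

namespace Matrix

variable {ι : Type*} [Fintype ι]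

theorem dotProduct_self_eq_card {R : Type*} [NonAssocSemiring R] {μ : ι → R}
    (hμ : ∀ i, μ i * μ i = 1) : μ ⬝ᵥ μ = Fintype.card ι := by
  simp [dotProduct, hμ]

variable [DecidableEq ι]

theorem eval_charpoly_eq_det_smul_one_sub {R : Type*} [CommRing R] (M : Matrix ι ι R) (x : R) :
    M.charpoly.eval x = (x • (1 : Matrix ι ι R) - M).det := by
  rw [eval_charpoly, scalar_apply, smul_one_eq_diagonal]

theorem det_fromBlocks_smul_one {K : Type*} [Field K] (a : K) {b : K} (hb : b ≠ 0)
    (B C : Matrix ι ι K) :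
    (fromBlocks (a • 1) B C (b • 1)).det = ((a * b) • 1 - B * C).det := by
  let : Invertible (b • (1 : Matrix ι ι K)) :=
    ⟨b⁻¹ • 1, by simp [smul_smul, hb], by simp [smul_smul, hb]⟩
  have hsplit : (a * b) • 1 - B * C = b • (a • 1 - B * ⅟(b • (1 : Matrix ι ι K)) * C) := by
    change _ = b • (a • 1 - B * (b⁻¹ • 1) * C)
    simp [smul_sub, smul_smul, hb, mul_comm a b]
  rw [det_fromBlocks₂₂, hsplit, det_smul, det_smul, det_one, mul_one]

end Matrix

theorem coronal_of_mulVec_eq_smul {V : Type} [Fintype V] [DecidableEq V] {M : Matrix V V ℝ}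
    {μ : V → ℝ} {r x : ℝ} (hM : M *ᵥ μ = r • μ) (hx : x ≠ r)
    (hdet : (x • (1 : Matrix V V ℝ) - M).det ≠ 0) :
    coronal M μ x = (μ ⬝ᵥ μ) / (x - r) := by
  let := invertibleOfIsUnitDet _ (isUnit_iff_ne_zero.2 hdet)
  have hE : (x • (1 : Matrix V V ℝ) - M) *ᵥ ((x - r)⁻¹ • μ) = μ := by
    rw [mulVec_smul, sub_mulVec, hM, smul_mulVec, one_mulVec, ← sub_smul, smul_smul,
      inv_mul_cancel₀ (sub_ne_zero.2 hx), one_smul]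
  rw [coronal, inv_mulVec_eq_vec hE.symm, dotProduct_smul, smul_eq_mul, div_eq_inv_mul]

/-- `(x - r)^|ι| · det ((x (x - m / (x - r)))•1 - Bm²)` with the denominators cleared; `m / (x - r)`
is the coronal of a regular signed graph (`coronal_of_mulVec_eq_smul`). -/
noncomputable def coronaFactor {ι : Type*} [Fintype ι] [DecidableEq ι] (m : ℕ) (r : ℝ)
    (Bm : Matrix ι ι ℝ) : ℝ[X] :=
  ((X ^ 3 - C r * X ^ 2 - C (m : ℝ) * X) • (1 : Matrix ι ι ℝ[X])
    - (X - C r) • (Bm * Bm).map C).det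

theorem eval_coronaFactor {ι : Type*} [Fintype ι] [DecidableEq ι] (m : ℕ) (r : ℝ)
    (Bm : Matrix ι ι ℝ) (x : ℝ) :
    (coronaFactor m r Bm).eval x
      = ((x ^ 3 - r * x ^ 2 - m * x) • (1 : Matrix ι ι ℝ) - (x - r) • (Bm * Bm)).det := by
  rw [coronaFactor, ← coe_evalRingHom, RingHom.map_det]
  congr 1
  ext i j
  by_cases h : i = j <;> simp [one_apply, h, mul_apply, eval_finsetSum]

section Corona

variable {n m : ℕ}

theorem muBlock_mul_kronecker_one (ν : Fin n → ℝ) (μ : Fin m → ℝ) (W : Matrix (Fin m) (Fin m) ℝ) :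
    muBlock ν μ * (W ⊗ₖ (1 : Matrix (Fin n) (Fin n) ℝ)) = muBlock ν (μ ᵥ* W) := by
  ext i ⟨b, l⟩
  simp only [mul_apply, muBlock, of_apply, kroneckerMap_apply, one_apply, vecMul, dotProduct,
    Fintype.sum_prod_type, diagonal_apply, Finset.sum_mul]
  by_cases h : i = l <;> simp [h, mul_right_comm]

theorem muBlock_mul_transpose {ν : Fin n → ℝ} (hν : ∀ i, ν i * ν i = 1) (μ μ' : Fin m → ℝ) :
    muBlock ν μ * (muBlock ν μ')ᵀ = (μ ⬝ᵥ μ') • 1 := by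
  ext i i'
  simp only [mul_apply, muBlock, of_apply, transpose_apply, Matrix.smul_apply, one_apply,
    dotProduct, Fintype.sum_prod_type, diagonal_apply]
  by_cases h : i = i'
  · subst h
    simp only [mul_ite, mul_zero, ite_mul, zero_mul, Finset.sum_ite_eq, Finset.mem_univ, ↓reduceIte,
      smul_eq_mul, mul_one]
    exact Finset.sum_congr rfl fun a _ => by linear_combination (μ a * μ' a) * hν i
  · simp [h]

theorem smul_one_sub_coronaStar (Bm : Matrix (Fin n) (Fin n) ℝ) (A : Matrix (Fin m) (Fin m) ℝ)
    (ν : Fin n → ℝ) (μ : Fin m → ℝ) (x : ℝ) :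
    x • 1 - coronaStar Bm A ν μ
      = fromBlocks (fromBlocks (x • 1) (-Bm) (-Bm) (x • 1))
          (fromRows 0 (-muBlock ν μ)) (fromCols 0 (-(muBlock ν μ)ᵀ))
          ((x • 1 - A) ⊗ₖ (1 : Matrix (Fin n) (Fin n) ℝ)) := by
  ext (⟨i | i⟩ | ⟨a, i⟩) (⟨j | j⟩ | ⟨b, j⟩) <;>
    simp [coronaStar, one_apply, Prod.ext_iff, ite_and]
  split_ifs <;> simp

theorem det_smul_one_sub_coronaStar {ν : Fin n → ℝ} (hν : ∀ i, ν i * ν i = 1)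
    (Bm : Matrix (Fin n) (Fin n) ℝ) (A : Matrix (Fin m) (Fin m) ℝ) (μ : Fin m → ℝ) {x : ℝ}
    (hA : (x • (1 : Matrix (Fin m) (Fin m) ℝ) - A).det ≠ 0) (hc : x - coronal A μ x ≠ 0) :
    (x • 1 - coronaStar Bm A ν μ).det
      = (x • (1 : Matrix (Fin m) (Fin m) ℝ) - A).det ^ n
        * ((x * (x - coronal A μ x)) • 1 - Bm * Bm).det := by
  set E := x • (1 : Matrix (Fin m) (Fin m) ℝ) - A
  let : Invertible E := invertibleOfIsUnitDet _ (isUnit_iff_ne_zero.2 hA)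
  let : Invertible (E ⊗ₖ (1 : Matrix (Fin n) (Fin n) ℝ)) :=
    ⟨⅟E ⊗ₖ 1, by simp [← mul_kronecker_mul], by simp [← mul_kronecker_mul]⟩
  have hschur : muBlock ν μ * (E ⊗ₖ (1 : Matrix (Fin n) (Fin n) ℝ))⁻¹ * (muBlock ν μ)ᵀ
      = coronal A μ x • 1 := by
    rw [inv_kronecker, inv_one, muBlock_mul_kronecker_one, muBlock_mul_transpose hν,
      ← dotProduct_mulVec, coronal]
  have hblock : fromBlocks (x • 1) (-Bm) (-Bm) (x • 1)
      - fromRows 0 (-muBlock ν μ) * ⅟(E ⊗ₖ (1 : Matrix (Fin n) (Fin n) ℝ))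
        * fromCols 0 (-(muBlock ν μ)ᵀ)
      = fromBlocks (x • 1) (-Bm) (-Bm) ((x - coronal A μ x) • 1) := by
    rw [invOf_eq_nonsing_inv, fromRows_mul, fromRows_mul_fromCols]
    simp only [Matrix.neg_mul, Matrix.mul_neg, neg_neg, Matrix.zero_mul, Matrix.mul_zero]
    rw [hschur]
    ext (i | i) (j | j) <;> simp [sub_smul]
  rw [smul_one_sub_coronaStar, det_fromBlocks₂₂, hblock, det_fromBlocks_smul_one _ hc, neg_mul_neg,
    det_kronecker, det_one, one_pow, mul_one, Fintype.card_fin]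

theorem det_smul_one_sub_coronaStar_of_mulVec_eq_smul {ν : Fin n → ℝ} (hν : ∀ i, ν i * ν i = 1)
    (Bm : Matrix (Fin n) (Fin n) ℝ) {A : Matrix (Fin m) (Fin m) ℝ} {μ : Fin m → ℝ}
    (hμ : ∀ i, μ i * μ i = 1) {r x : ℝ} (hA : A *ᵥ μ = r • μ)
    (hdet : (x • (1 : Matrix (Fin m) (Fin m) ℝ) - A).det ≠ 0) (hxr : x - r ≠ 0)
    (hq : x ^ 2 - r * x - m ≠ 0) :
    (x - r) ^ n * (x • 1 - coronaStar Bm A ν μ).det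
      = (x • (1 : Matrix (Fin m) (Fin m) ℝ) - A).det ^ n
        * ((x ^ 3 - r * x ^ 2 - m * x) • 1 - (x - r) • (Bm * Bm)).det := by
  have hc : coronal A μ x = m / (x - r) := by
    rw [coronal_of_mulVec_eq_smul hA (sub_ne_zero.1 hxr) hdet, dotProduct_self_eq_card hμ,
      Fintype.card_fin]
  have hxc : x - coronal A μ x ≠ 0 := by
    rw [hc, sub_div' hxr]
    exact div_ne_zero (fun h => hq (by linear_combination h)) hxr
  have hscale : (x ^ 3 - r * x ^ 2 - m * x) • (1 : Matrix (Fin n) (Fin n) ℝ) - (x - r) • (Bm * Bm)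
      = (x - r) • ((x * (x - coronal A μ x)) • 1 - Bm * Bm) := by
    rw [smul_sub, smul_smul, hc]
    congr 2
    field_simp
  rw [det_smul_one_sub_coronaStar hν Bm A μ hdet hxc, hscale, det_smul, Fintype.card_fin]
  ring

theorem charpoly_coronaStar_of_mulVec_eq_smul {ν : Fin n → ℝ} (hν : ∀ i, ν i * ν i = 1)
    (Bm : Matrix (Fin n) (Fin n) ℝ) {A : Matrix (Fin m) (Fin m) ℝ} {μ : Fin m → ℝ}
    (hμ : ∀ i, μ i * μ i = 1) {r : ℝ} (hA : A *ᵥ μ = r • μ) :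
    (X - C r) ^ n * (coronaStar Bm A ν μ).charpoly = A.charpoly ^ n * coronaFactor m r Bm := by
  set q : ℝ[X] := A.charpoly * ((X - C r) * (X ^ 2 - C r * X - C (m : ℝ)))
  have hq : q ≠ 0 := by
    refine (A.charpoly_monic.mul ((monic_X_sub_C r).mul ?_)).ne_zero
    monicity!
  refine eq_of_infinite_eval_eq _ _
    ((finite_setOfPred_isRoot hq).infinite_compl.mono fun x hx => ?_)
  simp only [Set.mem_compl_iff, Set.mem_ofPred_eq, IsRoot.def, q, eval_mul, eval_sub, eval_pow,
    eval_X, eval_C, mul_ne_zero_iff] at hx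
  obtain ⟨hdet, hxr, hquad⟩ := hx
  rw [eval_charpoly_eq_det_smul_one_sub] at hdet
  simp only [Set.mem_ofPred_eq, eval_mul, eval_pow, eval_sub, eval_X, eval_C,
    eval_charpoly_eq_det_smul_one_sub, eval_coronaFactor]
  exact det_smul_one_sub_coronaStar_of_mulVec_eq_smul hν Bm hμ hA hdet hxr hquad

theorem energy_coronaStar_add_of_mulVec_eq_smul {ν : Fin n → ℝ} (hν : ∀ i, ν i * ν i = 1)
    (Bm : Matrix (Fin n) (Fin n) ℝ) {A : Matrix (Fin m) (Fin m) ℝ} {μ : Fin m → ℝ}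
    (hμ : ∀ i, μ i * μ i = 1) {r : ℝ} (hA : A *ᵥ μ = r • μ) :
    energy (coronaStar Bm A ν μ) + n * |r|
      = n * energy A + ((coronaFactor m r Bm).roots.map abs).sum := by
  have hcp := charpoly_coronaStar_of_mulVec_eq_smul hν Bm hμ hA
  have hL : (X - C r) ^ n * (coronaStar Bm A ν μ).charpoly ≠ 0 :=
    (((monic_X_sub_C r).pow n).mul (charpoly_monic _)).ne_zero
  have hsum := congrArg (fun p => (p.roots.map abs).sum) hcp
  simp only [sum_map_roots_mul _ hL, sum_map_roots_mul _ (hcp ▸ hL), roots_pow,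
    roots_X_sub_C, Multiset.map_nsmul, Multiset.sum_nsmul, Multiset.map_singleton,
    Multiset.sum_singleton, nsmul_eq_mul] at hsum
  rw [energy, energy]
  linarith

theorem charpoly_eq_of_charpoly_coronaStar_eq (hn : n ≠ 0) {ν : Fin n → ℝ}
    (hν : ∀ i, ν i * ν i = 1) (Bm : Matrix (Fin n) (Fin n) ℝ) {r : ℝ}
    {A₁ A₂ : Matrix (Fin m) (Fin m) ℝ} {μ₁ μ₂ : Fin m → ℝ} (hμ₁ : ∀ i, μ₁ i * μ₁ i = 1)
    (hμ₂ : ∀ i, μ₂ i * μ₂ i = 1) (hA₁ : A₁ *ᵥ μ₁ = r • μ₁) (hA₂ : A₂ *ᵥ μ₂ = r • μ₂)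
    (h : (coronaStar Bm A₁ ν μ₁).charpoly = (coronaStar Bm A₂ ν μ₂).charpoly) :
    A₁.charpoly = A₂.charpoly := by
  have h₁ := charpoly_coronaStar_of_mulVec_eq_smul hν Bm hμ₁ hA₁
  have h₂ := charpoly_coronaStar_of_mulVec_eq_smul hν Bm hμ₂ hA₂
  have hL : (X - C r) ^ n * (coronaStar Bm A₂ ν μ₂).charpoly ≠ 0 :=
    (((monic_X_sub_C r).pow n).mul (charpoly_monic _)).ne_zero
  have hg : coronaFactor m r Bm ≠ 0 := right_ne_zero_of_mul (h₂ ▸ hL)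
  refine A₁.charpoly_monic.eq_of_pow_eq A₂.charpoly_monic hn (mul_right_cancel₀ hg ?_)
  rw [← h₁, ← h₂, h]

end Corona

theorem corona_equienergetic_regular_general (m : ℕ) (r : ℝ)
    (A1 : Matrix (Fin m) (Fin m) ℝ)
    (μ1 : Fin m → ℝ) (hμ1 : ∀ i, μ1 i = 1 ∨ μ1 i = -1)
    (hr1 : A1 *ᵥ μ1 = r • μ1)
    (A2 : Matrix (Fin m) (Fin m) ℝ)
    (μ2 : Fin m → ℝ) (hμ2 : ∀ i, μ2 i = 1 ∨ μ2 i = -1)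
    (hr2 : A2 *ᵥ μ2 = r • μ2)
    (hnoncospec : A1.charpoly ≠ A2.charpoly)
    (henergy : energy A1 = energy A2)
    (n : ℕ) (hn : 1 ≤ n)
    (B : Matrix (Fin n) (Fin n) ℝ)
    (ν : Fin n → ℝ) (hν : ∀ i, ν i = 1 ∨ ν i = -1) :
    energy (coronaStar (Matrix.diagonal ν * B.map abs * Matrix.diagonal ν) A1 ν μ1)
        = energy (coronaStar (Matrix.diagonal ν * B.map abs * Matrix.diagonal ν) A2 ν μ2) ∧
      (coronaStar (Matrix.diagonal ν * B.map abs * Matrix.diagonal ν) A1 ν μ1).charpoly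
        ≠ (coronaStar (Matrix.diagonal ν * B.map abs * Matrix.diagonal ν) A2 ν μ2).charpoly := by
  have hν' : ∀ i, ν i * ν i = 1 := fun i => mul_self_eq_one_iff.2 (hν i)
  have hμ1' : ∀ i, μ1 i * μ1 i = 1 := fun i => mul_self_eq_one_iff.2 (hμ1 i)
  have hμ2' : ∀ i, μ2 i * μ2 i = 1 := fun i => mul_self_eq_one_iff.2 (hμ2 i)
  set Bm := Matrix.diagonal ν * B.map abs * Matrix.diagonal ν
  refine ⟨?_, fun h => hnoncospec ?_⟩
  · have h₁ := energy_coronaStar_add_of_mulVec_eq_smul hν' Bm hμ1' hr1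
    have h₂ := energy_coronaStar_add_of_mulVec_eq_smul hν' Bm hμ2' hr2
    rw [henergy] at h₁
    linarith
  · exact charpoly_eq_of_charpoly_coronaStar_eq (by omega) hν' Bm hμ1' hμ2' hr1 hr2 h

/-- If `Γ₁, Γ₂` (same order `m`) satisfy `A₁·μ₁ = r·μ₁` and `A₂·μ₂ = r·μ₂`
for a common real `r` (as holds for `r`-regular signed graphs), are non-cospectral and
equienergetic, then for every signed graph `Γ` of order `n ≥ 1`, `Γ⊛Γ₁` and `Γ⊛Γ₂` are
non-cospectral and equienergetic. -/
theorem corona_equienergetic_regular (m : ℕ) (r : ℝ)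
    (A1 : Matrix (Fin m) (Fin m) ℝ) (hA1sym : A1.IsSymm) (hA1diag : ∀ i, A1 i i = 0)
    (hA1ent : ∀ i j, A1 i j = 1 ∨ A1 i j = 0 ∨ A1 i j = -1)
    (μ1 : Fin m → ℝ) (hμ1 : ∀ i, μ1 i = 1 ∨ μ1 i = -1)
    (hr1 : A1 *ᵥ μ1 = r • μ1)
    (A2 : Matrix (Fin m) (Fin m) ℝ) (hA2sym : A2.IsSymm) (hA2diag : ∀ i, A2 i i = 0)
    (hA2ent : ∀ i j, A2 i j = 1 ∨ A2 i j = 0 ∨ A2 i j = -1)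
    (μ2 : Fin m → ℝ) (hμ2 : ∀ i, μ2 i = 1 ∨ μ2 i = -1)
    (hr2 : A2 *ᵥ μ2 = r • μ2)
    (hnoncospec : A1.charpoly ≠ A2.charpoly)
    (henergy : energy A1 = energy A2)
    (n : ℕ) (hn : 1 ≤ n)
    (B : Matrix (Fin n) (Fin n) ℝ) (hBsym : B.IsSymm) (hBdiag : ∀ i, B i i = 0)
    (hBent : ∀ i j, B i j = 1 ∨ B i j = 0 ∨ B i j = -1)
    (ν : Fin n → ℝ) (hν : ∀ i, ν i = 1 ∨ ν i = -1) :
    energy (coronaStar (Matrix.diagonal ν * B.map abs * Matrix.diagonal ν) A1 ν μ1)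
        = energy (coronaStar (Matrix.diagonal ν * B.map abs * Matrix.diagonal ν) A2 ν μ2) ∧
      (coronaStar (Matrix.diagonal ν * B.map abs * Matrix.diagonal ν) A1 ν μ1).charpoly
        ≠ (coronaStar (Matrix.diagonal ν * B.map abs * Matrix.diagonal ν) A2 ν μ2).charpoly :=
  corona_equienergetic_regular_general m r A1 μ1 hμ1 hr1 A2 μ2 hμ2 hr2 hnoncospec henergy n hn B ν
    hν
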